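/- For a smooth function f ∈ C²(Ω) on a bounded domain Ω ⊂ ℝⁿ, τ ∈ (0,1), 1 < p < ∞, and each fixed x ∈ Ω: lim_{s↗1} (1-s) ∫_{|x-y| < τ d(x)} |∇f(x) · (x-y)/|x-y|^s |^p / |x-y|^n dy = K_{n,p} |∇f(x)|^p, where K_{n,p} = (1/p) ∫_{S^{n-1}} |σ_n|^p dσ. -/

import Mathlib

open MeasureTheory Metric Set Filter Topology
open scoped ENNReal NNReal

noncomputable section

/-- Euclidean space of dimension `d+1` (positive dimension). -/
abbrev Euc (d : ℕ) := EuclideanSpace ℝ (Fin (d+1))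

/-- The constant `K_{n,p} = (1/p) ∫_{S^{n-1}} |σ_n|^p dσ`, where the sphere carries its
surface measure and `σ_n` is the last coordinate of `σ`. -/
noncomputable def Knp (d : ℕ) (p : ℝ) : ℝ :=
  (1/p) * ∫ σ : Metric.sphere (0 : Euc d) 1,
    |(σ : Euc d) (Fin.last d)| ^ p ∂ ((volume : Measure (Euc d)).toSphere)

/-- `d(x) = dist(x, ∂Ω)`, the distance to the boundary of `Ω`. -/
noncomputable def dB {d : ℕ} (Ω : Set (Euc d)) (x : Euc d) : ℝ :=
  Metric.infDist x (frontier Ω)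

/-- `F` is a weak gradient of `f` on `Ω` (integration by parts against test functions). -/
def HasWeakGradOn {d : ℕ} (f : Euc d → ℝ) (F : Euc d → Euc d) (Ω : Set (Euc d)) : Prop :=
  ∀ φ : Euc d → ℝ, ContDiff ℝ (⊤ : ℕ∞) φ → HasCompactSupport φ → tsupport φ ⊆ Ω →
    ∀ v : Euc d, ∫ x in Ω, f x * fderiv ℝ φ x v = -(∫ x in Ω, (inner ℝ (F x) v : ℝ) * φ x)

/-- Membership in the Sobolev space `W^{1,p}(Ω)`. -/
def MemW1p {d : ℕ} (f : Euc d → ℝ) (p : ℝ) (Ω : Set (Euc d)) : Prop :=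
  MemLp f (ENNReal.ofReal p) (volume.restrict Ω) ∧
  ∃ F : Euc d → Euc d, HasWeakGradOn f F Ω ∧ MemLp F (ENNReal.ofReal p) (volume.restrict Ω)

/-- The restricted fractional seminorm to the `p`-th power:
`|f|_{W̃^{s,p}(Ω)}^p = ∫_Ω ∫_{|x-y|<τ d(x)} |f(x)-f(y)|^p / |x-y|^{n+sp} dy dx`. -/
noncomputable def tildeSemi {d : ℕ} (Ω : Set (Euc d)) (τ p s : ℝ) (f : Euc d → ℝ) : ℝ≥0∞ :=
  ∫⁻ x in Ω, ∫⁻ y in Metric.ball x (τ * dB Ω x),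
    ENNReal.ofReal (|f y - f x| ^ p / dist x y ^ ((d+1 : ℝ) + s * p))

/-- The full Gagliardo seminorm to the `p`-th power on a set `Ω'`. -/
noncomputable def gagSemi {d : ℕ} (Ω' : Set (Euc d)) (p s : ℝ) (f : Euc d → ℝ) : ℝ≥0∞ :=
  ∫⁻ x in Ω', ∫⁻ y in Ω',
    ENNReal.ofReal (|f x - f y| ^ p / dist x y ^ ((d+1 : ℝ) + s * p))

/-- `F_s(x) = ∫_{|h| < τ d(x)} |f(x+h)-f(x)|^p / |h|^{n+sp} dh`. -/
noncomputable def Fs {d : ℕ} (Ω : Set (Euc d)) (τ p s : ℝ) (f : Euc d → ℝ) (x : Euc d) : ℝ≥0∞ :=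
  ∫⁻ h in Metric.ball (0 : Euc d) (τ * dB Ω x),
    ENNReal.ofReal (|f (x + h) - f x| ^ p / ‖h‖ ^ ((d+1 : ℝ) + s * p))

/-- One-sided directional maximal function `h₁(x,ν) = sup_{t>0} (1/t) ∫₀^t h(x+sν) ds`. -/
noncomputable def dirMax {d : ℕ} (h : Euc d → ℝ) (x ν : Euc d) : ℝ≥0∞ :=
  ⨆ t : {t : ℝ // 0 < t}, ENNReal.ofReal ((1 / t.1) * ∫ s in Set.Ioc 0 t.1, h (x + s • ν))

/-- `h*(x) = (∫_{S^{n-1}} h₁(x,ν)^p dσ_ν)^{1/p}`. -/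
noncomputable def sphMax {d : ℕ} (h : Euc d → ℝ) (p : ℝ) (x : Euc d) : ℝ≥0∞ :=
  (∫⁻ ν : Metric.sphere (0 : Euc d) 1, (dirMax h x (ν : Euc d)) ^ p
      ∂ ((volume : Measure (Euc d)).toSphere)) ^ (1/p)

/-- The geodesic (intrinsic) distance in `Ω`: the infimum of lengths of paths in `Ω`. -/
noncomputable def geoDist {d : ℕ} (Ω : Set (Euc d)) (x y : Euc d) : ℝ≥0∞ :=
  ⨅ (γ : Path x y) (_ : Set.range γ ⊆ Ω),
    eVariationOn (fun t : ℝ => γ.extend t) (Set.Icc 0 1)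


lemma finrank_Euc (d : ℕ) : Module.finrank ℝ (Euc d) = d + 1 := by
  simp [finrank_euclideanSpace]

/-- Polar coordinates for lintegrals on `Euc d`. -/
lemma lintegral_polar {d : ℕ} (Φ : Euc d → ℝ≥0∞) (hΦ : Measurable Φ) :
    ∫⁻ z, Φ z ∂(volume : Measure (Euc d)) =
      ∫⁻ σ : sphere (0 : Euc d) 1, ∫⁻ r : Ioi (0:ℝ), Φ ((r : ℝ) • (σ : Euc d))
        ∂(Measure.volumeIoiPow d) ∂((volume : Measure (Euc d)).toSphere) := by
  have h0 : (volume : Measure (Euc d)) ({0}ᶜ)ᶜ = 0 := by simp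
  have hd : Module.finrank ℝ (Euc d) - 1 = d := by rw [finrank_Euc]; rfl
  have key := (Measure.measurePreserving_homeomorphUnitSphereProd
      (volume : Measure (Euc d))).lintegral_comp
      (f := fun p : sphere (0 : Euc d) 1 × Ioi (0:ℝ) => Φ ((p.2 : ℝ) • (p.1 : Euc d)))
      (by
        exact hΦ.comp ((measurable_subtype_coe.comp measurable_snd).smul
          (measurable_subtype_coe.comp measurable_fst)))
  rw [hd] at key
  calc ∫⁻ z, Φ z ∂(volume : Measure (Euc d))
      = ∫⁻ z in ({0}ᶜ : Set (Euc d)), Φ z ∂volume := by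
        rw [MeasureTheory.restrict_compl_singleton]
    _ = ∫⁻ z : ({0}ᶜ : Set (Euc d)), Φ z ∂((volume : Measure (Euc d)).comap (↑)) := by
        rw [lintegral_subtype_comap (measurableSet_singleton _).compl]
    _ = ∫⁻ p : sphere (0 : Euc d) 1 × Ioi (0:ℝ), Φ ((p.2 : ℝ) • (p.1 : Euc d))
          ∂((volume : Measure (Euc d)).toSphere.prod (Measure.volumeIoiPow d)) := by
        rw [← key]
        refine lintegral_congr fun z => ?_
        congr 1
        have h2 : (((homeomorphUnitSphereProd (Euc d)).symm ((homeomorphUnitSphereProd (Euc d)) z)) : Euc d)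
            = ((((homeomorphUnitSphereProd (Euc d)) z).2 : ℝ) •
                (((homeomorphUnitSphereProd (Euc d)) z).1 : Euc d)) := by
          rw [homeomorphUnitSphereProd_symm_apply_coe]
        rw [← h2, (homeomorphUnitSphereProd (Euc d)).symm_apply_apply z]
    _ = _ := by
        rw [lintegral_prod _ (by
          exact (hΦ.comp ((measurable_subtype_coe.comp measurable_snd).smul
            (measurable_subtype_coe.comp measurable_fst))).aemeasurable)]

/-- lintegral against `volumeIoiPow d` as a weighted Lebesgue integral. -/
lemma lintegral_volumeIoiPow {d : ℕ} (g : ℝ → ℝ≥0∞) (hg : Measurable g) :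
    ∫⁻ r : Ioi (0:ℝ), g (r : ℝ) ∂(Measure.volumeIoiPow d) =
      ∫⁻ r in Ioi (0:ℝ), ENNReal.ofReal (r ^ d) * g r ∂volume := by
  rw [Measure.volumeIoiPow, lintegral_withDensity_eq_lintegral_mul _ (by
      exact (measurable_subtype_coe.pow_const _).ennreal_ofReal)
      (show Measurable fun r : Ioi (0:ℝ) => g (r : ℝ) from hg.comp measurable_subtype_coe)]
  simp only [Pi.mul_apply]
  exact lintegral_subtype_comap measurableSet_Ioi fun r => ENNReal.ofReal (r ^ d) * g r

lemma volumeIoiPow_lt_one {d : ℕ} :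
    (Measure.volumeIoiPow d) {r : Ioi (0:ℝ) | (r : ℝ) < 1} =
      ENNReal.ofReal (1 / (d + 1)) := by
  have : {r : Ioi (0:ℝ) | (r : ℝ) < 1} = Iio (⟨1, mem_Ioi.2 one_pos⟩ : Ioi (0:ℝ)) := rfl
  rw [this, Measure.volumeIoiPow_apply_Iio]
  norm_num

/-- Sphere-measure integrals via the unit ball. -/
lemma lintegral_toSphere_eq {d : ℕ} (ψ : Euc d → ℝ≥0∞) (hψ : Measurable ψ) :
    (∫⁻ σ : sphere (0 : Euc d) 1, ψ (σ : Euc d) ∂((volume : Measure (Euc d)).toSphere))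
        * ENNReal.ofReal (1 / (d + 1)) =
      ∫⁻ z in ball (0 : Euc d) 1, ψ (‖z‖⁻¹ • z) ∂volume := by
  have hmeas : Measurable fun z : Euc d => ψ (‖z‖⁻¹ • z) :=
    hψ.comp ((measurable_norm.inv).smul measurable_id)
  have hΦ : Measurable ((ball (0 : Euc d) 1).indicator fun z => ψ (‖z‖⁻¹ • z)) :=
    hmeas.indicator measurableSet_ball
  rw [← lintegral_indicator measurableSet_ball, lintegral_polar _ hΦ]
  have hinner : ∀ σ : sphere (0 : Euc d) 1,
      (∫⁻ r : Ioi (0:ℝ), (ball (0 : Euc d) 1).indicator (fun z => ψ (‖z‖⁻¹ • z))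
          ((r : ℝ) • (σ : Euc d)) ∂(Measure.volumeIoiPow d))
        = ψ (σ : Euc d) * ENNReal.ofReal (1 / (d + 1)) := by
    intro σ
    have hσ : ‖(σ : Euc d)‖ = 1 := by
      simpa using mem_sphere_zero_iff_norm.1 σ.2
    have hpt : ∀ r : Ioi (0:ℝ),
        (ball (0 : Euc d) 1).indicator (fun z => ψ (‖z‖⁻¹ • z)) ((r : ℝ) • (σ : Euc d))
          = {r : Ioi (0:ℝ) | (r : ℝ) < 1}.indicator (fun _ => ψ (σ : Euc d)) r := by
      intro r
      have hr : (0:ℝ) < r := r.2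
      have hnrm : ‖(r : ℝ) • (σ : Euc d)‖ = (r : ℝ) := by
        rw [norm_smul, hσ, Real.norm_eq_abs, abs_of_pos hr, mul_one]
      have hmem : ((r : ℝ) • (σ : Euc d) ∈ ball (0 : Euc d) 1) ↔ (r : ℝ) < 1 := by
        rw [mem_ball_zero_iff, hnrm]
      by_cases h : (r : ℝ) < 1
      · rw [Set.indicator_of_mem (hmem.2 h),
          Set.indicator_of_mem (show r ∈ {r' : Ioi (0:ℝ) | (r' : ℝ) < 1} from h)]
        rw [hnrm, smul_smul, inv_mul_cancel₀ hr.ne', one_smul]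
      · rw [Set.indicator_of_notMem (fun hc => h (hmem.1 hc)),
          Set.indicator_of_notMem (show r ∉ {r' : Ioi (0:ℝ) | (r' : ℝ) < 1} from h)]
    rw [lintegral_congr hpt, lintegral_indicator_const, volumeIoiPow_lt_one]
    exact measurable_subtype_coe measurableSet_Iio
  rw [lintegral_congr hinner]
  exact (lintegral_mul_const _ (show Measurable fun σ : sphere (0 : Euc d) 1 => ψ (σ : Euc d)
    from hψ.comp measurable_subtype_coe)).symm

/-- Invariance of sphere lintegrals under linear isometries. -/
lemma lintegral_toSphere_comp {d : ℕ} (e : Euc d ≃ₗᵢ[ℝ] Euc d) (ψ : Euc d → ℝ≥0∞)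
    (hψ : Measurable ψ) :
    ∫⁻ σ : sphere (0 : Euc d) 1, ψ (e (σ : Euc d)) ∂((volume : Measure (Euc d)).toSphere) =
      ∫⁻ σ : sphere (0 : Euc d) 1, ψ (σ : Euc d) ∂((volume : Measure (Euc d)).toSphere) := by
  have hc0 : ENNReal.ofReal (1 / (d + 1 : ℝ)) ≠ 0 := by
    rw [Ne, ENNReal.ofReal_eq_zero, not_le]
    positivity
  have hctop : ENNReal.ofReal (1 / (d + 1 : ℝ)) ≠ ⊤ := ENNReal.ofReal_ne_top
  rw [← ENNReal.mul_left_inj hc0 hctop]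
  have hψe : Measurable fun z => ψ (e z) := hψ.comp e.continuous.measurable
  rw [lintegral_toSphere_eq _ hψe, lintegral_toSphere_eq _ hψ]
  have hpre : e ⁻¹' ball (0 : Euc d) 1 = ball (0 : Euc d) 1 := by
    rw [e.preimage_ball, map_zero]
  calc ∫⁻ z in ball (0 : Euc d) 1, ψ (e (‖z‖⁻¹ • z)) ∂volume
      = ∫⁻ z in e ⁻¹' ball (0 : Euc d) 1, (fun w => ψ (‖w‖⁻¹ • w)) (e z) ∂volume := by
        rw [hpre]
        refine setLIntegral_congr_fun measurableSet_ball (fun z _ => ?_)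
        simp only []
        rw [e.norm_map, e.map_smul]
    _ = ∫⁻ w in ball (0 : Euc d) 1, ψ (‖w‖⁻¹ • w) ∂volume :=
        e.measurePreserving.setLIntegral_comp_preimage measurableSet_ball
          (hψ.comp ((measurable_norm.inv).smul measurable_id))

lemma sphere_const {d : ℕ} (p : ℝ) (hp : 0 < p) (g : Euc d) :
    ∫⁻ σ : sphere (0 : Euc d) 1, ENNReal.ofReal (|(inner ℝ g (σ : Euc d) : ℝ)| ^ p)
        ∂((volume : Measure (Euc d)).toSphere) =
      ENNReal.ofReal (‖g‖ ^ p) *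
        ∫⁻ σ : sphere (0 : Euc d) 1, ENNReal.ofReal (|(σ : Euc d) (Fin.last d)| ^ p)
          ∂((volume : Measure (Euc d)).toSphere) := by
  by_cases hg : g = 0
  · simp [hg, Real.zero_rpow hp.ne', abs_of_nonneg, inner_zero_left]
  · set u : Euc d := ‖g‖⁻¹ • g with hu
    have hgn : ‖g‖ ≠ 0 := norm_ne_zero_iff.2 hg
    have hun : ‖u‖ = 1 := by
      rw [hu, norm_smul, norm_inv, norm_norm, inv_mul_cancel₀ hgn]
    set E : Euc d := EuclideanSpace.single (Fin.last d) (1:ℝ) with hE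
    have hEn : ‖E‖ = 1 := by rw [hE, EuclideanSpace.norm_single, norm_one]
    set e : Euc d ≃ₗᵢ[ℝ] Euc d := Submodule.reflection (ℝ ∙ (E - u))ᗮ with he
    have heE : e E = u := Submodule.reflection_sub (by rw [hEn, hun])
    have hmeas : Measurable fun z : Euc d => ENNReal.ofReal (|(inner ℝ g z : ℝ)| ^ p) := by
      have : Continuous fun z : Euc d => |(inner ℝ g z : ℝ)| ^ p := by
        refine Continuous.rpow_const ?_ fun z => Or.inr hp.le
        exact (continuous_const.inner continuous_id).abs
      exact this.measurable.ennreal_ofReal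
    have key := lintegral_toSphere_comp e _ hmeas
    rw [← key]
    have hpt : ∀ σ : sphere (0 : Euc d) 1,
        ENNReal.ofReal (|(inner ℝ g (e (σ : Euc d)) : ℝ)| ^ p)
          = ENNReal.ofReal (‖g‖ ^ p) * ENNReal.ofReal (|(σ : Euc d) (Fin.last d)| ^ p) := by
      intro σ
      have h1 : (inner ℝ g (e (σ : Euc d)) : ℝ) = ‖g‖ * (σ : Euc d) (Fin.last d) := by
        have hg' : g = ‖g‖ • u := by rw [hu, smul_smul, mul_inv_cancel₀ hgn, one_smul]
        have h0 : (‖g‖ : ℝ) * (inner ℝ u (e (σ : Euc d)) : ℝ)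
            = (inner ℝ g (e (σ : Euc d)) : ℝ) := by
          rw [← real_inner_smul_left, ← hg']
        have h2 : (inner ℝ u (e (σ : Euc d)) : ℝ) = (σ : Euc d) (Fin.last d) := by
          rw [← heE, e.inner_map_map, hE, EuclideanSpace.inner_single_left]
          simp
        rw [← h0, h2]
      rw [h1, abs_mul, abs_of_nonneg (norm_nonneg g),
        Real.mul_rpow (norm_nonneg g) (abs_nonneg _), ENNReal.ofReal_mul
          (Real.rpow_nonneg (norm_nonneg g) p)]
    rw [lintegral_congr hpt]
    refine lintegral_const_mul _ ?_
    have : Continuous fun σ : sphere (0 : Euc d) 1 => |(σ : Euc d) (Fin.last d)| ^ p := by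
      refine Continuous.rpow_const ?_ fun z => Or.inr hp.le
      exact ((PiLp.continuous_apply 2 _ _).comp continuous_subtype_val).abs
    exact this.measurable.ennreal_ofReal

lemma radial_lintegral {e R : ℝ} (he : -1 < e) (hR : 0 < R) :
    ∫⁻ r in Ioo (0:ℝ) R, ENNReal.ofReal (r ^ e) ∂volume
      = ENNReal.ofReal (R ^ (e + 1) / (e + 1)) := by
  rw [setLIntegral_congr Ioo_ae_eq_Ioc]
  have hint : IntegrableOn (fun r : ℝ => r ^ e) (Ioc 0 R) volume :=
    (intervalIntegral.intervalIntegrable_rpow' he).1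
  rw [← ofReal_integral_eq_lintegral_ofReal hint (by
    filter_upwards [ae_restrict_mem measurableSet_Ioc] with r hr
    exact Real.rpow_nonneg hr.1.le _)]
  congr 1
  rw [← intervalIntegral.integral_of_le hR.le, integral_rpow (Or.inl he),
    Real.zero_rpow (by linarith), sub_zero]

lemma ball_lintegral {d : ℕ} (g : Euc d) {p s R : ℝ} (hp : 0 < p) (hs : s < 1) (hR : 0 < R) :
    ∫⁻ z in ball (0 : Euc d) R,
        ENNReal.ofReal ((|(inner ℝ g z : ℝ)| / ‖z‖ ^ s) ^ p / ‖z‖ ^ ((d:ℝ) + 1)) ∂volume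
      = (∫⁻ σ : sphere (0 : Euc d) 1, ENNReal.ofReal (|(inner ℝ g (σ : Euc d) : ℝ)| ^ p)
            ∂((volume : Measure (Euc d)).toSphere))
          * ENNReal.ofReal (R ^ ((1-s)*p) / ((1-s)*p)) := by
  have hb : 0 < (1-s)*p := mul_pos (by linarith) hp
  have hmeas0 : Measurable fun z : Euc d =>
      ENNReal.ofReal ((|(inner ℝ g z : ℝ)| / ‖z‖ ^ s) ^ p / ‖z‖ ^ ((d:ℝ) + 1)) := by
    have h1 : Measurable fun z : Euc d => |(inner ℝ g z : ℝ)| :=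
      ((continuous_const.inner continuous_id).abs).measurable
    have h2 : Measurable fun z : Euc d => ‖z‖ ^ s := measurable_norm.pow measurable_const
    have h3 : Measurable fun z : Euc d => ‖z‖ ^ ((d:ℝ) + 1) := measurable_norm.pow measurable_const
    exact ((((h1.div h2).pow measurable_const)).div h3).ennreal_ofReal
  have hΦ : Measurable ((ball (0 : Euc d) R).indicator fun z =>
      ENNReal.ofReal ((|(inner ℝ g z : ℝ)| / ‖z‖ ^ s) ^ p / ‖z‖ ^ ((d:ℝ) + 1))) :=
    hmeas0.indicator measurableSet_ball
  rw [← lintegral_indicator measurableSet_ball, lintegral_polar _ hΦ]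
  have hinner : ∀ σ : sphere (0 : Euc d) 1,
      (∫⁻ r : Ioi (0:ℝ), (ball (0 : Euc d) R).indicator (fun z =>
          ENNReal.ofReal ((|(inner ℝ g z : ℝ)| / ‖z‖ ^ s) ^ p / ‖z‖ ^ ((d:ℝ) + 1)))
          ((r : ℝ) • (σ : Euc d)) ∂(Measure.volumeIoiPow d))
        = ENNReal.ofReal (|(inner ℝ g (σ : Euc d) : ℝ)| ^ p)
            * ENNReal.ofReal (R ^ ((1-s)*p) / ((1-s)*p)) := by
    intro σ
    have hσ : ‖(σ : Euc d)‖ = 1 := by simpa using mem_sphere_zero_iff_norm.1 σ.2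
    set a : ℝ := (inner ℝ g (σ : Euc d) : ℝ) with ha
    have hF : Measurable fun r : ℝ => (ball (0 : Euc d) R).indicator (fun z =>
        ENNReal.ofReal ((|(inner ℝ g z : ℝ)| / ‖z‖ ^ s) ^ p / ‖z‖ ^ ((d:ℝ) + 1)))
        (r • (σ : Euc d)) :=
      hΦ.comp (measurable_id.smul measurable_const)
    rw [lintegral_volumeIoiPow _ hF]
    have hpt : ∀ r ∈ Ioi (0:ℝ),
        ENNReal.ofReal (r ^ d) * (ball (0 : Euc d) R).indicator (fun z =>
          ENNReal.ofReal ((|(inner ℝ g z : ℝ)| / ‖z‖ ^ s) ^ p / ‖z‖ ^ ((d:ℝ) + 1)))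
          (r • (σ : Euc d))
        = (Ioo (0:ℝ) R).indicator (fun r => ENNReal.ofReal (|a| ^ p * r ^ ((1-s)*p - 1))) r := by
      intro r hr
      have hr0 : (0:ℝ) < r := hr
      have hnrm : ‖r • (σ : Euc d)‖ = r := by
        rw [norm_smul, hσ, Real.norm_eq_abs, abs_of_pos hr0, mul_one]
      have hmem : (r • (σ : Euc d) ∈ ball (0 : Euc d) R) ↔ r < R := by
        rw [mem_ball_zero_iff, hnrm]
      by_cases h : r < R
      · rw [Set.indicator_of_mem (hmem.2 h), Set.indicator_of_mem (mem_Ioo.2 ⟨hr0, h⟩)]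
        rw [← ENNReal.ofReal_mul (by positivity)]
        congr 1
        have hia : (inner ℝ g (r • (σ : Euc d)) : ℝ) = r * a := real_inner_smul_right g _ r
        rw [hia, hnrm]
        have habs : |r * a| = r * |a| := by rw [abs_mul, abs_of_pos hr0]
        have hdiv : r * |a| / r ^ s = |a| * r ^ (1 - s) := by
          rw [Real.rpow_sub hr0, Real.rpow_one]
          field_simp
        rw [habs, hdiv, Real.mul_rpow (abs_nonneg a) (Real.rpow_nonneg hr0.le _),
          ← Real.rpow_mul hr0.le]
        have h1 : r ^ ((1-s)*p - 1) = r ^ ((1-s)*p) * r ^ ((d:ℝ)) / r ^ ((d:ℝ)+1) := by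
          rw [← Real.rpow_add hr0, ← Real.rpow_sub hr0]
          ring_nf
        rw [← Real.rpow_natCast r d, h1]
        ring
      · rw [Set.indicator_of_notMem (fun hc => h (hmem.1 hc)),
          Set.indicator_of_notMem (fun hc : r ∈ Ioo 0 R => h hc.2), mul_zero]
    rw [setLIntegral_congr_fun measurableSet_Ioi hpt]
    rw [lintegral_indicator measurableSet_Ioo, Measure.restrict_restrict measurableSet_Ioo,
      inter_eq_self_of_subset_left Ioo_subset_Ioi_self]
    have : ∀ r ∈ Ioo (0:ℝ) R, ENNReal.ofReal (|a| ^ p * r ^ ((1-s)*p - 1))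
        = ENNReal.ofReal (|a| ^ p) * ENNReal.ofReal (r ^ ((1-s)*p - 1)) := by
      intro r hr
      rw [← ENNReal.ofReal_mul (Real.rpow_nonneg (abs_nonneg a) p)]
    rw [setLIntegral_congr_fun measurableSet_Ioo this,
      lintegral_const_mul _ (by exact (measurable_id.pow measurable_const).ennreal_ofReal),
      radial_lintegral (by linarith) hR, sub_add_cancel]
  rw [lintegral_congr hinner]
  refine lintegral_mul_const _ ?_
  have : Continuous fun σ : sphere (0 : Euc d) 1 => |(inner ℝ g (σ : Euc d) : ℝ)| ^ p := by
    refine Continuous.rpow_const ?_ fun z => Or.inr hp.le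
    exact ((continuous_const.inner continuous_subtype_val).abs)
  exact this.measurable.ennreal_ofReal

/-- Step 1: for `f ∈ C²(Ω)` and fixed `x ∈ Ω`,
`lim_{s↗1} (1-s) ∫_{|x-y|<τd(x)} |∇f(x)·(x-y)/|x-y|^s|^p |x-y|^{-n} dy = K_{n,p} |∇f(x)|^p`. -/
theorem stmt4 {d : ℕ} (Ω : Set (Euc d)) (hΩo : IsOpen Ω) (hΩc : IsConnected Ω)
    (hΩb : Bornology.IsBounded Ω) (τ : ℝ) (hτ : τ ∈ Set.Ioo (0:ℝ) 1)
    (p : ℝ) (hp : 1 < p) (f : Euc d → ℝ) (hf : ContDiffOn ℝ 2 f Ω)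
    (x : Euc d) (hx : x ∈ Ω) :
    Tendsto (fun s : ℝ => (1 - s) * ∫ y in Metric.ball x (τ * dB Ω x),
        (|(inner ℝ (gradient f x) (x - y) : ℝ)| / ‖x - y‖ ^ s) ^ p / ‖x - y‖ ^ ((d:ℝ) + 1))
      (𝓝[<] (1:ℝ)) (𝓝 (Knp d p * ‖gradient f x‖ ^ p)) := by
  have hp0 : 0 < p := lt_trans zero_lt_one hp
  set g : Euc d := gradient f x with hg
  set R : ℝ := τ * dB Ω x with hRdef
  -- positivity of R
  have hne : (frontier Ω).Nonempty := by
    rw [nonempty_iff_ne_empty]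
    intro h
    have hclopen : IsClopen Ω := isClopen_iff_frontier_eq_empty.2 h
    rcases isClopen_iff.1 hclopen with h1 | h1
    · rw [h1] at hx; exact hx
    · rw [h1] at hΩb
      obtain ⟨r, hr⟩ := hΩb.subset_ball 0
      obtain ⟨z, hz⟩ := NormedSpace.exists_lt_norm ℝ (Euc d) (max r 1)
      have : z ∈ Metric.ball (0 : Euc d) r := hr (mem_univ z)
      rw [mem_ball_zero_iff] at this
      have := lt_trans (lt_of_le_of_lt (le_max_left r 1) hz) this
      exact lt_irrefl _ this
  have hxf : x ∉ frontier Ω := by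
    rw [hΩo.frontier_eq]
    exact fun h => h.2 hx
  have hdb : 0 < dB Ω x := by
    rw [dB]
    exact (isClosed_frontier.notMem_iff_infDist_pos hne).1 hxf
  have hR : 0 < R := mul_pos hτ.1 hdb
  set Ctop : ℝ≥0∞ := ∫⁻ σ : sphere (0 : Euc d) 1,
      ENNReal.ofReal (|(inner ℝ g (σ : Euc d) : ℝ)| ^ p)
      ∂((volume : Measure (Euc d)).toSphere) with hCdef
  -- measurability of the model integrand
  have hmeasF0 : ∀ s : ℝ, Measurable fun z : Euc d =>
      ENNReal.ofReal ((|(inner ℝ g z : ℝ)| / ‖z‖ ^ s) ^ p / ‖z‖ ^ ((d:ℝ) + 1)) := by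
    intro s
    have h1 : Measurable fun z : Euc d => |(inner ℝ g z : ℝ)| :=
      ((continuous_const.inner continuous_id).abs).measurable
    exact ((((h1.div (measurable_norm.pow measurable_const))).pow
      measurable_const).div (measurable_norm.pow measurable_const)).ennreal_ofReal
  -- the exact formula for each s < 1
  have hform : ∀ s : ℝ, s < 1 →
      (1 - s) * ∫ y in Metric.ball x R,
          (|(inner ℝ g (x - y) : ℝ)| / ‖x - y‖ ^ s) ^ p / ‖x - y‖ ^ ((d:ℝ) + 1)
        = Ctop.toReal * R ^ ((1 - s) * p) / p := by
    intro s hs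
    have hb : 0 < (1 - s) * p := mul_pos (by linarith) hp0
    have hmeasF : Measurable fun y : Euc d =>
        (|(inner ℝ g (x - y) : ℝ)| / ‖x - y‖ ^ s) ^ p / ‖x - y‖ ^ ((d:ℝ) + 1) := by
      have h1 : Measurable fun y : Euc d => |(inner ℝ g (x - y) : ℝ)| :=
        ((continuous_const.inner (continuous_const.sub continuous_id)).abs).measurable
      have h2 : Measurable fun y : Euc d => ‖x - y‖ :=
        (continuous_const.sub continuous_id).norm.measurable
      exact ((h1.div (h2.pow measurable_const)).pow measurable_const).div
        (h2.pow measurable_const)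
    have hnn : ∀ y : Euc d,
        0 ≤ (|(inner ℝ g (x - y) : ℝ)| / ‖x - y‖ ^ s) ^ p / ‖x - y‖ ^ ((d:ℝ) + 1) := by
      intro y
      positivity
    rw [integral_eq_lintegral_of_nonneg_ae (ae_of_all _ fun y => hnn y)
      hmeasF.aestronglyMeasurable]
    -- change variables z = x - y
    have hT : MeasurePreserving (fun z : Euc d => x - z) volume volume := by
      have h1 := Measure.measurePreserving_neg (volume : Measure (Euc d))
      have h2 := measurePreserving_add_left (volume : Measure (Euc d)) x
      have h3 := h2.comp h1
      have : (fun z : Euc d => x + -z) = fun z : Euc d => x - z := by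
        funext z; rw [sub_eq_add_neg]
      rwa [Function.comp_def, this] at h3
    have hpre : (fun z : Euc d => x - z) ⁻¹' Metric.ball x R = Metric.ball 0 R := by
      ext z
      simp only [mem_preimage, mem_ball, dist_eq_norm, sub_sub_cancel_left, norm_neg, sub_zero]
    have hsub := hT.setLIntegral_comp_preimage (s := Metric.ball x R)
      measurableSet_ball (f := fun y : Euc d =>
        ENNReal.ofReal ((|(inner ℝ g (x - y) : ℝ)| / ‖x - y‖ ^ s) ^ p / ‖x - y‖ ^ ((d:ℝ) + 1)))
      (by exact hmeasF.ennreal_ofReal)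
    rw [hpre] at hsub
    rw [← hsub]
    have hcongr : ∀ z : Euc d,
        ENNReal.ofReal ((|(inner ℝ g (x - (x - z)) : ℝ)| / ‖x - (x - z)‖ ^ s) ^ p
          / ‖x - (x - z)‖ ^ ((d:ℝ) + 1))
        = ENNReal.ofReal ((|(inner ℝ g z : ℝ)| / ‖z‖ ^ s) ^ p / ‖z‖ ^ ((d:ℝ) + 1)) := by
      intro z; rw [sub_sub_cancel]
    rw [lintegral_congr fun z => hcongr z, ball_lintegral g hp0 hs hR, ← hCdef,
      ENNReal.toReal_mul, ENNReal.toReal_ofReal (div_nonneg (Real.rpow_nonneg hR.le _) hb.le)]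
    field_simp [show (1 - s) ≠ 0 by linarith]
  -- the limit of the explicit formula
  have hlim : Tendsto (fun s : ℝ => Ctop.toReal * R ^ ((1 - s) * p) / p)
      (𝓝[<] (1:ℝ)) (𝓝 (Ctop.toReal / p)) := by
    have h1 : Tendsto (fun s : ℝ => (1 - s) * p) (𝓝[<] (1:ℝ)) (𝓝 0) := by
      have h1' : Tendsto (fun s : ℝ => (1 - s) * p) (𝓝 (1:ℝ)) (𝓝 ((1 - 1) * p)) :=
        (((continuous_const.sub continuous_id).mul continuous_const).tendsto 1)
      have h1'' : Tendsto (fun s : ℝ => (1 - s) * p) (𝓝[<] (1:ℝ)) (𝓝 ((1 - 1) * p)) :=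
        h1'.mono_left nhdsWithin_le_nhds
      simpa using h1'' 
    have h2 : Tendsto (fun t : ℝ => R ^ t) (𝓝 0) (𝓝 1) := by
      have := (Real.continuousAt_const_rpow (a := R) (b := 0) hR.ne').tendsto
      simpa [Real.rpow_zero] using this
    have h3 := ((h2.comp h1).const_mul Ctop.toReal).div_const p
    simpa using h3
  -- identify the limit with the constant
  have hC : Ctop.toReal / p = Knp d p * ‖g‖ ^ p := by
    have hK : Ctop = ENNReal.ofReal (‖g‖ ^ p) *
        ∫⁻ σ : sphere (0 : Euc d) 1, ENNReal.ofReal (|(σ : Euc d) (Fin.last d)| ^ p)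
          ∂((volume : Measure (Euc d)).toSphere) := sphere_const p hp0 g
    have hcont : Continuous fun σ : sphere (0 : Euc d) 1 => |(σ : Euc d) (Fin.last d)| ^ p := by
      refine Continuous.rpow_const ?_ fun z => Or.inr hp0.le
      exact ((PiLp.continuous_apply 2 _ _).comp continuous_subtype_val).abs
    have hKB : (∫ σ : sphere (0 : Euc d) 1, |(σ : Euc d) (Fin.last d)| ^ p
          ∂((volume : Measure (Euc d)).toSphere))
        = (∫⁻ σ : sphere (0 : Euc d) 1, ENNReal.ofReal (|(σ : Euc d) (Fin.last d)| ^ p)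
          ∂((volume : Measure (Euc d)).toSphere)).toReal := by
      exact integral_eq_lintegral_of_nonneg_ae
        (ae_of_all _ fun σ => Real.rpow_nonneg (abs_nonneg _) p) hcont.aestronglyMeasurable
    rw [hK, ENNReal.toReal_mul, ENNReal.toReal_ofReal (Real.rpow_nonneg (norm_nonneg g) p),
      Knp, ← hKB]
    ring
  refine Tendsto.congr' ?_ (hC ▸ hlim)
  filter_upwards [self_mem_nhdsWithin] with s hs
  exact (hform s hs).symm
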